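/- arXiv:1803.00076 — 6 statements merged into one kernel-verified Lean document; each statement's English description precedes it below -/
import Mathlib

section
/- Let G be a group acting on ℝ by order-preserving bijections, and let c, l ∈ G satisfy the relation c·l·c·l⁻¹·c⁻¹·l⁻ˢ·c⁻¹·l⁻¹·c·l·c·l^(s-1) = 1 for some integer s ≥ 1. If y < c·y for all y ∈ ℝ, then (c·l·c)·x < (l·c·l)·x for all x ∈ ℝ. -/
/-- If `G` acts on `ℝ` by order-preserving bijections via `ρ`, `c, l ∈ G` satisfy the
pretzel-knot relation `c l c l⁻¹ c⁻¹ l⁻ˢ c⁻¹ l⁻¹ c l c l^(s-1) = 1` for some `s ≥ 1`, and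
`ρ c` moves every point strictly up, then `(c l c)·x < (l c l)·x` for every `x`. -/
theorem stmt0 {G : Type*} [Group G] (ρ : G →* (ℝ ≃o ℝ)) (c l : G) (s : ℤ) (hs : 1 ≤ s)
    (hrel : c * l * c * l⁻¹ * c⁻¹ * l ^ (-s) * c⁻¹ * l⁻¹ * c * l * c * l ^ (s - 1) = 1)
    (hc : ∀ y : ℝ, y < ρ c y) :
    ∀ x : ℝ, ρ (c * l * c) x < ρ (l * c * l) x := by
  -- key group identity
  have key : l * c * l ^ s * c * l = c * l * c * l ^ (s - 1) * (c * l * c) := by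
    have h1 : l * c * l ^ s * c * l * (c * l * c * l ^ (s - 1) * (c * l * c))⁻¹ =
        (l * c * l ^ s * c * l * (c * l * c)⁻¹) *
          (c * l * c * l⁻¹ * c⁻¹ * l ^ (-s) * c⁻¹ * l⁻¹ * c * l * c * l ^ (s - 1))⁻¹ *
          (l * c * l ^ s * c * l * (c * l * c)⁻¹)⁻¹ := by
      group
    rw [hrel, inv_one, mul_one, mul_inv_cancel] at h1
    exact mul_inv_eq_one.mp h1
  intro x
  by_contra hcon
  push_neg at hcon
  -- notation
  have happ : ∀ g h : G, ∀ y : ℝ, ρ (g * h) y = ρ g (ρ h y) := by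
    intro g h y; rw [map_mul]; rfl
  have hA : ∀ y : ℝ, ρ (l * c) y < ρ (c * l * c) y := by
    intro y
    have h := hc (ρ (l * c) y)
    rw [← happ] at h
    have e : c * (l * c) = c * l * c := by group
    rwa [e] at h
  -- the chain
  have h2 : ρ (l * c * l ^ s * c * l) x =
      ρ (c * l * c) (ρ (l ^ (s - 1)) (ρ (c * l * c) x)) := by
    rw [key, happ, happ]
  have h3 : ρ (c * l * c) (ρ (l ^ (s - 1)) (ρ (c * l * c) x)) ≥
      ρ (c * l * c) (ρ (l ^ (s - 1)) (ρ (l * c * l) x)) :=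
    (ρ _).monotone ((ρ _).monotone hcon)
  have h4 : ρ (c * l * c) (ρ (l ^ (s - 1)) (ρ (l * c * l) x)) >
      ρ (l * c) (ρ (l ^ (s - 1)) (ρ (l * c * l) x)) := hA _
  have h5 : ρ (l * c) (ρ (l ^ (s - 1)) (ρ (l * c * l) x)) =
      ρ (l * c * l ^ s * c * l) x := by
    rw [← happ, ← happ]
    congr 1
    group
  linarith [h2, h3, h4, h5]
end

section
/- Let c, l be order-preserving bijections of ℝ such that c(l(c(x))) < l(c(l(x))) for all x ∈ ℝ. Then cˢ(l(c(x))) < l(c(lˢ(x))) and c(l(cˢ(x))) < lˢ(c(l(x))) for all x ∈ ℝ and all integers s ≥ 1. -/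
/-- If `c, l` are order-preserving bijections of `ℝ` with `c(l(c x)) < l(c(l x))` for all `x`,
then for all integers `s ≥ 1` and all `x`, `cˢ(l(c x)) < l(c(lˢ x))` and
`c(l(cˢ x)) < lˢ(c(l x))`. -/
theorem stmt1 (c l : ℝ ≃o ℝ) (h : ∀ x : ℝ, c (l (c x)) < l (c (l x))) :
    ∀ s : ℕ, 1 ≤ s → ∀ x : ℝ,
      (c ^ s) (l (c x)) < l (c ((l ^ s) x)) ∧ c (l ((c ^ s) x)) < (l ^ s) (c (l x)) := by
  intro s
  induction s with
  | zero => intro h0; omega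
  | succ n ih =>
    intro _ x
    rcases Nat.eq_zero_or_pos n with hn | hn
    · subst hn
      exact ⟨by simpa using h x, by simpa using h x⟩
    constructor
    · have h1 := (ih hn x).1
      calc (c ^ (n+1)) (l (c x)) = c ((c ^ n) (l (c x))) := by
            rw [pow_succ']; rfl
        _ < c (l (c ((l ^ n) x))) := c.strictMono h1
        _ < l (c (l ((l ^ n) x))) := h _
        _ = l (c ((l ^ (n+1)) x)) := by rw [pow_succ']; rfl
    · have h2 := (ih hn (c x)).2
      calc c (l ((c ^ (n+1)) x)) = c (l ((c ^ n) (c x))) := by rw [pow_succ]; rfl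
        _ < (l ^ n) (c (l (c x))) := h2
        _ < (l ^ n) (l (c (l x))) := (l ^ n).strictMono (h x)
        _ = (l ^ (n+1)) (c (l x)) := by rw [pow_succ]; rfl
end

section
/- Let c, l, k be order-preserving bijections of ℝ such that c = k^q (q ≥ 1) and (c⁻¹)^{2s-2} ∘ l ∘ c ∘ l^s ∘ c ∘ l^s ∘ c ∘ l ∘ (c⁻¹)^{2s+9} = k^{-p} (with s ≥ 3, p ≥ 1). If x ∈ ℝ is a fixed point of k, then x is fixed by c, and if moreover x < l(x) or l(x) < x, a contradiction arises; hence any common fixed point of k is a common fixed point of both c and l. -/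
/-! Since `c` is a power of `k`, every power of `k` and of `c` fixes a fixed point `x` of `k`.
If `x < l x`, every factor of the relator moves `x` weakly up (the powers of `c` fix it, and
`s ≥ 0`), and its last factor `l` moves `x` strictly up; so the relator moves `x` strictly up,
while `k ^ (-p)` fixes it. The case `l x < x` is the same argument in the order dual. -/

namespace OrderIso

variable {α : Type*}

instance applyMulAction [LE α] : MulAction (α ≃o α) α where
  smul f x := f x
  one_smul _ := rfl
  mul_smul _ _ _ := rfl

theorem mem_stabilizer_iff [LE α] {f : α ≃o α} {x : α} :
    f ∈ MulAction.stabilizer (α ≃o α) x ↔ f x = x :=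
  Iff.rfl

def dualAut [LE α] : (α ≃o α) ≃* (αᵒᵈ ≃o αᵒᵈ) where
  toFun := OrderIso.dual
  invFun f := f.dual
  left_inv _ := rfl
  right_inv _ := rfl
  map_mul' _ _ := rfl

section Preorder

variable [Preorder α]

def submonoidLeApply (x : α) : Submonoid (α ≃o α) where
  carrier := {g | x ≤ g x}
  one_mem' := le_rfl
  mul_mem' {f _} hf hg := hf.trans (f.monotone hg)

theorem mem_submonoidLeApply {f : α ≃o α} {x : α} : f ∈ submonoidLeApply x ↔ x ≤ f x :=
  Iff.rfl

theorem stabilizer_le_submonoidLeApply (x : α) :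
    (MulAction.stabilizer (α ≃o α) x).toSubmonoid ≤ submonoidLeApply x :=
  fun _ hf => hf.ge

theorem lt_mul_mul_apply {a l b : α ≃o α} {x : α} (ha : x ≤ a x) (hl : x < l x)
    (hb : x ≤ b x) : x < (a * l * b) x :=
  ha.trans_lt (a.strictMono (hl.trans_le (l.monotone hb)))

end Preorder

end OrderIso

open OrderIso

def relatorWord {G : Type*} [Group G] (c l : G) (s : ℤ) : G :=
  c ^ (-(2 * s - 2)) * l * c * l ^ s * c * l ^ s * c * l * c ^ (-(2 * s + 9))

theorem map_relatorWord {G H F : Type*} [Group G] [Group H] [FunLike F G H]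
    [MonoidHomClass F G H] (f : F) (c l : G) (s : ℤ) :
    f (relatorWord c l s) = relatorWord (f c) (f l) s := by
  simp only [relatorWord, map_mul, map_zpow]

theorem lt_relatorWord_apply {α : Type*} [Preorder α] {c l : α ≃o α} {x : α} {s : ℤ}
    (hc : c x = x) (hl : x < l x) (hs : 0 ≤ s) : x < relatorWord c l s x := by
  set M := submonoidLeApply x
  have hcS : c ∈ MulAction.stabilizer (α ≃o α) x := mem_stabilizer_iff.2 hc
  have hcM : ∀ n : ℤ, c ^ n ∈ M := fun n =>
    stabilizer_le_submonoidLeApply x (Subgroup.zpow_mem _ hcS n)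
  have hc1M : c ∈ M := stabilizer_le_submonoidLeApply x hcS
  have hlM : l ∈ M := mem_submonoidLeApply.2 hl.le
  have hlsM : l ^ s ∈ M := by
    lift s to ℕ using hs
    simpa only [zpow_natCast] using Submonoid.pow_mem M hlM s
  refine lt_mul_mul_apply (mem_submonoidLeApply.1 ?_) hl (hcM _)
  exact M.mul_mem (M.mul_mem (M.mul_mem (M.mul_mem (M.mul_mem (M.mul_mem (hcM _) hlM) hc1M)
    hlsM) hc1M) hlsM) hc1M

theorem relatorWord_apply_ne {α : Type*} [LinearOrder α] {c l : α ≃o α} {x : α} {s : ℤ}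
    (hc : c x = x) (hl : l x ≠ x) (hs : 0 ≤ s) : relatorWord c l s x ≠ x := by
  rcases hl.lt_or_gt with hlt | hgt
  · have h := lt_relatorWord_apply (c := dualAut c) (l := dualAut l) (x := OrderDual.toDual x)
      hc hlt hs
    rw [← map_relatorWord] at h
    exact h.ne'
  · exact (lt_relatorWord_apply hc hgt hs).ne'

theorem stmt3_general (c l k : ℝ ≃o ℝ) (p q s : ℤ) (hs : 3 ≤ s)
    (hc : c = k ^ q)
    (hrel : c ^ (-(2 * s - 2)) * l * c * l ^ s * c * l ^ s * c * l * c ^ (-(2 * s + 9))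
      = k ^ (-p)) :
    ∀ x : ℝ, k x = x → c x = x ∧ l x = x := by
  intro x hk
  have hkx : k ∈ MulAction.stabilizer (ℝ ≃o ℝ) x := mem_stabilizer_iff.2 hk
  have hcx : c x = x := mem_stabilizer_iff.1 (hc ▸ Subgroup.zpow_mem _ hkx q)
  refine ⟨hcx, ?_⟩
  by_contra hl
  refine relatorWord_apply_ne hcx hl (show 0 ≤ s by omega) ?_
  rw [relatorWord, hrel]
  exact Subgroup.zpow_mem _ hkx (-p)

/-- Let `c, l, k` be order-preserving bijections of `ℝ` with `c = k^q` (`q ≥ 1`) and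
`c^{-(2s-2)} l c l^s c l^s c l c^{-(2s+9)} = k^{-p}` (`p ≥ 1`, `s ≥ 3`).  Then any fixed
point of `k` is a common fixed point of `c` and `l`. -/
theorem stmt3 (c l k : ℝ ≃o ℝ) (p q s : ℤ) (hp : 1 ≤ p) (hq : 1 ≤ q) (hs : 3 ≤ s)
    (hc : c = k ^ q)
    (hrel : c ^ (-(2 * s - 2)) * l * c * l ^ s * c * l ^ s * c * l * c ^ (-(2 * s + 9))
      = k ^ (-p)) :
    ∀ x : ℝ, k x = x → c x = x ∧ l x = x :=
  stmt3_general c l k p q s hs hc hrel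
end

section
/- Every nontrivial countable left-orderable group G admits an injective homomorphism ρ: G → Homeo₊(ℝ) (the group of order-preserving bijections of ℝ) with no global fixed point: there is no x ∈ ℝ with ρ(g)(x) = x for all g ∈ G. -/
/-!
Order `G` and let it act by left translations on `G ×ₗ ℚ`, a countable dense linear order
without endpoints, hence order-isomorphic to `ℚ` by Cantor's back-and-forth theorem. Every order
automorphism of `ℚ` extends uniquely to a monotone bijection of `ℝ` (by suprema over rationals),
so this gives an action of `G` on `ℝ`. It is faithful since the action on `G ×ₗ ℚ` is, and it has
no global fixed point because every orbit is cofinal: `G` has no largest element.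
-/

/-- A group is left-orderable if it admits a strict total order invariant under left
multiplication. -/
def LeftOrderable (G : Type*) [Group G] : Prop :=
  ∃ r : G → G → Prop, IsStrictTotalOrder G r ∧ ∀ f g h : G, r g h → r (f * g) (f * h)

open Function

namespace OrderIso

section

variable {α β : Type*} [Preorder α] [Preorder β]

def autCongr (e : α ≃o β) : (α ≃o α) ≃* (β ≃o β) where
  toFun f := (e.symm.trans f).trans e
  invFun f := (e.trans f).trans e.symm
  left_inv f := by ext; simp
  right_inv f := by ext; simp
  map_mul' f g := by ext; simp [RelIso.mul_apply]

variable (β) in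
def prodLexCongrLeft : (α ≃o α) →* (α ×ₗ β ≃o α ×ₗ β) where
  toFun f := Prod.Lex.prodLexCongr f (refl β)
  map_one' := by ext; rfl
  map_mul' f g := by ext; rfl

@[simp]
lemma prodLexCongrLeft_apply (f : α ≃o α) (p : α ×ₗ β) :
    prodLexCongrLeft β f p = toLex (f (ofLex p).1, (ofLex p).2) :=
  rfl

lemma prodLexCongrLeft_injective [Nonempty β] :
    Injective (prodLexCongrLeft β : (α ≃o α) →* (α ×ₗ β ≃o α ×ₗ β)) := by
  intro f g hfg
  ext a
  obtain ⟨b⟩ := ‹Nonempty β›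
  simpa using congrArg (fun h => (ofLex (h (toLex (a, b)))).1) hfg

end

section

variable (G : Type*) [Group G] [LE G] [MulLeftMono G]

def mulLeftHom : G →* (G ≃o G) where
  toFun := mulLeft
  map_one' := by ext; simp
  map_mul' g h := by ext; simp [RelIso.mul_apply, mul_assoc]

@[simp]
lemma mulLeftHom_apply (g a : G) : mulLeftHom G g a = g * a :=
  rfl

lemma mulLeftHom_injective : Injective (mulLeftHom G) := by
  intro g h hgh
  simpa using congrArg (fun f => f 1) hgh

end

section

noncomputable def ratExtendFun (f : ℚ ≃o ℚ) (x : ℝ) : ℝ :=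
  sSup ((fun q : ℚ => (f q : ℝ)) '' {q | (q : ℝ) < x})

variable (f : ℚ ≃o ℚ)

lemma ratExtendFun_set_nonempty (x : ℝ) :
    ((fun q : ℚ => (f q : ℝ)) '' {q | (q : ℝ) < x}).Nonempty :=
  let ⟨q, hq⟩ := exists_rat_lt x
  ⟨f q, q, hq, rfl⟩

lemma ratExtendFun_set_bddAbove (x : ℝ) :
    BddAbove ((fun q : ℚ => (f q : ℝ)) '' {q | (q : ℝ) < x}) := by
  obtain ⟨r, hxr⟩ := exists_rat_gt x
  refine ⟨f r, ?_⟩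
  rintro _ ⟨q, hqx, rfl⟩
  exact Rat.cast_le.mpr (f.monotone (Rat.cast_le.mp (hqx.trans hxr).le))

lemma le_ratExtendFun {q : ℚ} {x : ℝ} (h : (q : ℝ) < x) : (f q : ℝ) ≤ ratExtendFun f x :=
  le_csSup (ratExtendFun_set_bddAbove f x) ⟨q, h, rfl⟩

lemma ratExtendFun_le {q : ℚ} {x : ℝ} (h : x ≤ q) : ratExtendFun f x ≤ f q := by
  refine csSup_le (ratExtendFun_set_nonempty f x) ?_
  rintro _ ⟨p, hpx, rfl⟩
  exact Rat.cast_le.mpr (f.monotone (Rat.cast_le.mp (hpx.trans_le h).le))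

lemma monotone_ratExtendFun : Monotone (ratExtendFun f) := fun x y hxy =>
  csSup_le_csSup (ratExtendFun_set_bddAbove f y) (ratExtendFun_set_nonempty f x)
    (Set.image_mono fun _ hq => lt_of_lt_of_le hq hxy)

/-- A monotone extension of `f` is determined by `f`: a gap at `x` would contain a rational,
whose preimage under `f` could lie neither below nor above `x`. -/
lemma eq_ratExtendFun_of_monotone {m : ℝ → ℝ} (hm : Monotone m) (hmf : ∀ q : ℚ, m q = f q) :
    m = ratExtendFun f := by
  funext x
  refine le_antisymm (not_lt.mp fun hlt => ?_) (csSup_le (ratExtendFun_set_nonempty f x) ?_)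
  · obtain ⟨r, hr, hrm⟩ := exists_rat_btwn hlt
    rcases lt_or_ge ((f.symm r : ℚ) : ℝ) x with hx | hx
    · have := le_ratExtendFun f hx
      rw [apply_symm_apply] at this
      exact hr.not_ge this
    · have := hm hx
      rw [hmf, apply_symm_apply] at this
      exact hrm.not_ge this
  · rintro _ ⟨q, hqx, rfl⟩
    exact (hmf q).symm.trans_le (hm hqx.le)

@[simp]
lemma ratExtendFun_ratCast (q : ℚ) : ratExtendFun f q = f q :=
  le_antisymm (ratExtendFun_le f le_rfl) <| le_of_forall_lt fun c hc => by
    obtain ⟨r, hcr, hrq⟩ := exists_rat_btwn hc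
    have hpq : ((f.symm r : ℚ) : ℝ) < q := by
      exact_mod_cast (f.symm_apply_lt).mpr (by exact_mod_cast hrq)
    have := le_ratExtendFun f hpq
    rw [apply_symm_apply] at this
    exact hcr.trans_le this

lemma ratExtendFun_mul (g : ℚ ≃o ℚ) : ratExtendFun (f * g) = ratExtendFun f ∘ ratExtendFun g :=
  (eq_ratExtendFun_of_monotone _ ((monotone_ratExtendFun f).comp (monotone_ratExtendFun g))
    fun q => by simp [RelIso.mul_apply]).symm

lemma ratExtendFun_one : ratExtendFun 1 = id :=
  (eq_ratExtendFun_of_monotone 1 monotone_id fun _ => rfl).symm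

lemma ratExtendFun_inv_comp_self : ratExtendFun f⁻¹ ∘ ratExtendFun f = id := by
  rw [← ratExtendFun_mul, inv_mul_cancel, ratExtendFun_one]

noncomputable def ratExtend : (ℚ ≃o ℚ) →* (ℝ ≃o ℝ) where
  toFun f := Equiv.toOrderIso
    ⟨ratExtendFun f, ratExtendFun f⁻¹, congrFun (ratExtendFun_inv_comp_self f),
      fun x => by simpa using congrFun (ratExtendFun_inv_comp_self f⁻¹) x⟩
    (monotone_ratExtendFun f) (monotone_ratExtendFun f⁻¹)
  map_one' := by ext x; exact congrFun ratExtendFun_one x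
  map_mul' f g := by ext x; exact congrFun (ratExtendFun_mul f g) x

@[simp]
lemma ratExtend_ratCast (q : ℚ) : ratExtend f q = f q :=
  ratExtendFun_ratCast f q

lemma ratExtend_injective : Injective ratExtend := by
  intro f g hfg
  ext q
  simpa using congrArg (fun h : ℝ ≃o ℝ => h q) hfg

end

end OrderIso

lemma noMaxOrder_of_nontrivial (G : Type*) [Group G] [LinearOrder G] [MulLeftStrictMono G]
    [Nontrivial G] : NoMaxOrder G := by
  obtain ⟨f, hf⟩ := exists_ne (1 : G)
  obtain ⟨u, hu⟩ : ∃ u : G, 1 < u := by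
    rcases hf.lt_or_gt with hlt | hgt
    · exact ⟨f⁻¹, Left.one_lt_inv_iff.mpr hlt⟩
    · exact ⟨f, hgt⟩
  exact ⟨fun a => ⟨a * u, lt_mul_of_one_lt_right' a hu⟩⟩

def HasCofinalOrbits {G α : Type*} [Group G] [Preorder α] (φ : G →* (α ≃o α)) : Prop :=
  ∀ a b : α, ∃ g, b < φ g a

namespace HasCofinalOrbits

variable {G α β : Type*} [Group G] [Preorder α] [Preorder β] {φ : G →* (α ≃o α)}

lemma not_exists_fixed (h : HasCofinalOrbits φ) : ¬∃ x, ∀ g, φ g x = x := by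
  rintro ⟨x, hx⟩
  obtain ⟨g, hg⟩ := h x x
  exact hg.ne' (hx g)

lemma autCongr (h : HasCofinalOrbits φ) (e : α ≃o β) :
    HasCofinalOrbits ((OrderIso.autCongr e).toMonoidHom.comp φ) := fun a b => by
  obtain ⟨g, hg⟩ := h (e.symm a) (e.symm b)
  exact ⟨g, e.symm_apply_lt.mp hg⟩

lemma ratExtend {φ : G →* (ℚ ≃o ℚ)} (h : HasCofinalOrbits φ) :
    HasCofinalOrbits (OrderIso.ratExtend.comp φ) := fun x y => by
  obtain ⟨a, hax⟩ := exists_rat_lt x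
  obtain ⟨b, hyb⟩ := exists_rat_gt y
  obtain ⟨g, hg⟩ := h a b
  refine ⟨g, ?_⟩
  calc y < b := hyb
    _ < φ g a := by exact_mod_cast hg
    _ = OrderIso.ratExtend (φ g) a := (OrderIso.ratExtend_ratCast _ a).symm
    _ < OrderIso.ratExtend (φ g) x := (OrderIso.ratExtend (φ g)).strictMono hax

end HasCofinalOrbits

lemma hasCofinalOrbits_prodLex (G β : Type*) [Group G] [Preorder G] [MulLeftMono G]
    [NoMaxOrder G] [Preorder β] :
    HasCofinalOrbits ((OrderIso.prodLexCongrLeft β).comp (OrderIso.mulLeftHom G)) := by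
  intro a b
  obtain ⟨c, hc⟩ := exists_gt (ofLex b).1
  refine ⟨c * (ofLex a).1⁻¹, Prod.Lex.lt_iff.mpr (Or.inl ?_)⟩
  rwa [MonoidHom.comp_apply, OrderIso.prodLexCongrLeft_apply, ofLex_toLex,
    OrderIso.mulLeftHom_apply, inv_mul_cancel_right]

/-- Every nontrivial countable left-orderable group admits an injective homomorphism into
the order-preserving bijections of `ℝ` with no global fixed point. -/
theorem stmt4 (G : Type*) [Group G] [Countable G] [Nontrivial G] (hLO : LeftOrderable G) :
    ∃ ρ : G →* (ℝ ≃o ℝ), Function.Injective ρ ∧ ¬∃ x : ℝ, ∀ g : G, ρ g x = x := by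
  classical
  obtain ⟨r, hr, hmul⟩ := hLO
  let : LinearOrder G := @linearOrderOfSTO G r hr _
  have : MulLeftStrictMono G := ⟨fun f _ _ => hmul f _ _⟩
  have := mulLeftMono_of_mulLeftStrictMono G
  have := noMaxOrder_of_nontrivial G
  have : Countable (G ×ₗ ℚ) := inferInstanceAs (Countable (G × ℚ))
  have : Nonempty (G ×ₗ ℚ) := inferInstanceAs (Nonempty (G × ℚ))
  obtain ⟨e⟩ := Order.iso_of_countable_dense (G ×ₗ ℚ) ℚ
  let φ := (OrderIso.prodLexCongrLeft ℚ).comp (OrderIso.mulLeftHom G)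
  refine ⟨OrderIso.ratExtend.comp ((OrderIso.autCongr e).toMonoidHom.comp φ), ?_, ?_⟩
  · exact OrderIso.ratExtend_injective.comp <| (OrderIso.autCongr e).injective.comp <|
      OrderIso.prodLexCongrLeft_injective.comp (OrderIso.mulLeftHom_injective G)
  · exact ((hasCofinalOrbits_prodLex G ℚ).autCongr e).ratExtend.not_exists_fixed
end

section
/- Let c, l, k be order-preserving bijections of ℝ, s ≥ 3 and p, q ≥ 1 integers with p/q ≥ 2s + 3. Assume: (i) x < k(x) for all x; (ii) c = k^q; (iii) k^{-p} = c^{-(2s-2)} ∘ l ∘ c ∘ l^s ∘ c ∘ l^s ∘ c ∘ l ∘ c^{-(2s+9)}; (iv) for all x and all s' ≥ 1, c^{s'}(l(c(x))) < l(c(l^{s'}(x))) and c(l(c^{s'}(x))) < l^{s'}(c(l(x))). Then l(x) < c(x) for all x ∈ ℝ. -/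
/-- Under the hypotheses (i) `k` moves points up, (ii) `c = k^q`, (iii) the longitude
relation, (iv) the inductive inequalities, and `p/q ≥ 2s+3`, we get `l x < c x` for all
`x ∈ ℝ`. -/
theorem stmt11 (c l k : ℝ ≃o ℝ) (s p q : ℤ) (hs : 3 ≤ s) (hp : 1 ≤ p) (hq : 1 ≤ q)
    (hslope : (2 * s + 3 : ℚ) ≤ (p : ℚ) / (q : ℚ))
    (hk : ∀ x : ℝ, x < k x)
    (hc : c = k ^ q)
    (hrel : k ^ (-p) =
      c ^ (-(2 * s - 2)) * l * c * l ^ s * c * l ^ s * c * l * c ^ (-(2 * s + 9)))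
    (hind : ∀ s' : ℕ, 1 ≤ s' → ∀ x : ℝ,
      (c ^ s') (l (c x)) < l (c ((l ^ s') x)) ∧ c (l ((c ^ s') x)) < (l ^ s') (c (l x))) :
    ∀ x : ℝ, l x < c x := by
  have mono : ∀ (f : ℝ ≃o ℝ) {x y : ℝ}, x < y → f x < f y := fun f _ _ h => f.strictMono h
  have monole : ∀ (f : ℝ ≃o ℝ) {x y : ℝ}, x ≤ y → f x ≤ f y := fun f _ _ h => f.monotone h
  obtain ⟨S, rfl⟩ : ∃ S : ℕ, s = (S : ℤ) := ⟨s.toNat, (Int.toNat_of_nonneg (by omega)).symm⟩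
  have hS3 : 3 ≤ S := by exact_mod_cast hs
  have hS1 : 1 ≤ S := by omega
  -- nonnegative powers of `k` move points up
  have hkn : ∀ (n : ℕ) (x : ℝ), x ≤ (k ^ n) x := by
    intro n
    induction n with
    | zero => intro x; simp
    | succ n ih =>
        intro x
        have h : (k ^ (n + 1)) x = (k ^ n) (k x) := by rw [pow_succ]; rfl
        rw [h]
        exact (hk x).le.trans (ih (k x))
  -- nonpositive powers of `k` move points down
  have hkz : ∀ (m : ℤ), m ≤ 0 → ∀ x : ℝ, (k ^ m) x ≤ x := by
    intro m hm x
    obtain ⟨n, rfl⟩ : ∃ n : ℕ, m = -(n : ℤ) := ⟨(-m).toNat, by omega⟩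
    have h1 : (k ^ (-(n : ℤ))) x = (k ^ n)⁻¹ x := by rw [zpow_neg, zpow_natCast]
    rw [h1]
    calc (k ^ n)⁻¹ x ≤ (k ^ n) ((k ^ n)⁻¹ x) := hkn n _
      _ = x := RelIso.apply_inv_self _ _
  -- `c` moves points up
  have hcx : ∀ x : ℝ, x < c x := by
    intro x
    obtain ⟨Q, hQ⟩ : ∃ Q : ℕ, q = (Q : ℤ) + 1 := ⟨(q - 1).toNat, by omega⟩
    have h : c x = (k ^ (Q + 1)) x := by
      rw [hc, hQ, show ((Q : ℤ) + 1) = ((Q + 1 : ℕ) : ℤ) by push_cast; ring, zpow_natCast]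
    rw [h, pow_succ]
    exact lt_of_lt_of_le (hk x) (hkn Q (k x))
  -- `l` moves points up
  have hlx : ∀ x : ℝ, x < l x := by
    intro x
    by_contra hcon
    push_neg at hcon
    have h1 := (hind 1 le_rfl x).1
    simp only [pow_one] at h1
    have h2 : l (c (l x)) ≤ l (c x) := monole l (monole c hcon)
    exact absurd (h1.trans_le h2) (not_lt.2 (hcx (l (c x))).le)
  -- the word identity
  have hword : k ^ (q * (2 * (S : ℤ) + 3) - p)
      = c ^ (-(S : ℤ)) * l * c * l ^ (S : ℤ) * c * l ^ (S : ℤ) * c * l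
          * c ^ (-((S : ℤ) + 4)) := by
    have h1 : k ^ (q * (2 * (S : ℤ) + 3) - p)
        = c ^ ((S : ℤ) - 2) * k ^ (-p) * c ^ ((S : ℤ) + 5) := by
      rw [hc, ← zpow_mul, ← zpow_mul, ← zpow_add, ← zpow_add]
      congr 1
      ring
    rw [h1, hrel]
    group
  -- exponent inequality
  have hpq : q * (2 * (S : ℤ) + 3) - p ≤ 0 := by
    have hq0 : (0 : ℚ) < (q : ℚ) := by exact_mod_cast hq
    rw [le_div_iff₀ hq0] at hslope
    have h2 : (2 * (S : ℤ) + 3) * q ≤ p := by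
      have := hslope
      push_cast at this
      exact_mod_cast this
    have h3 : q * (2 * (S : ℤ) + 3) = (2 * (S : ℤ) + 3) * q := mul_comm _ _
    linarith
  -- application helpers
  have happ : ∀ (a b : ℤ) (y : ℝ), (c ^ (a + b)) y = (c ^ a) ((c ^ b) y) := by
    intro a b y; rw [zpow_add]; rfl
  have happn : ∀ (n : ℕ) (y : ℝ), (c ^ (n + 1)) y = c ((c ^ n) y) := by
    intro n y; rw [pow_succ']; rfl
  intro x
  set u : ℝ := (c ^ (-((S : ℤ) + 3))) x with hu
  have hxu : (c ^ (S + 3)) u = x := by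
    rw [hu, ← zpow_natCast c (S + 3), ← happ,
      show (((S + 3 : ℕ) : ℤ) + -((S : ℤ) + 3)) = 0 by push_cast; ring]
    simp
  -- the main inductive chain
  have h1 := (hind S hS1 ((c ^ (S + 2)) u)).1
  have h2 := (hind S hS1 u).2
  have h3 : c ((c ^ S) u) < c (l ((c ^ S) u)) := mono c (hlx _)
  have h4 : c ((c ^ S) u) < (l ^ S) (c (l u)) := h3.trans h2
  have h5 : c (c ((c ^ S) u)) < c ((l ^ S) (c (l u))) := mono c h4
  have e1 : (c ^ (S + 2)) u = c (c ((c ^ S) u)) := by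
    rw [show S + 2 = (S + 1) + 1 from rfl, happn (S + 1), happn S]
  have h6 : (c ^ (S + 2)) u < c ((l ^ S) (c (l u))) := by rw [e1]; exact h5
  have h7 : (l ^ S) ((c ^ (S + 2)) u) < (l ^ S) (c ((l ^ S) (c (l u)))) := mono _ h6
  have h8 : l (c ((l ^ S) ((c ^ (S + 2)) u)))
      < l (c ((l ^ S) (c ((l ^ S) (c (l u)))))) := mono l (mono c h7)
  have e2 : c ((c ^ (S + 2)) u) = x := by rw [← happn (S + 2)]; exact hxu
  rw [e2] at h1
  have hV : (c ^ S) (l x) < l (c ((l ^ S) (c ((l ^ S) (c (l u)))))) := h1.trans h8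
  -- the other side
  have hup : (k ^ (q * (2 * (S : ℤ) + 3) - p)) (c x) ≤ c x := hkz _ hpq (c x)
  have einner : (c ^ (-((S : ℤ) + 4))) (c x) = u := by
    conv_lhs => rw [show c x = (c ^ (1 : ℤ)) x by rw [zpow_one]]
    rw [← happ, show (-((S : ℤ) + 4) + 1) = -((S : ℤ) + 3) by ring, hu]
  have hwx : (k ^ (q * (2 * (S : ℤ) + 3) - p)) (c x)
      = (c ^ (-(S : ℤ))) (l (c ((l ^ S) (c ((l ^ S) (c (l u))))))) := by
    rw [hword]
    simp only [RelIso.mul_apply]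
    rw [einner, zpow_natCast l S]
  -- conclude
  have hfin : l x < (c ^ (-(S : ℤ))) (l (c ((l ^ S) (c ((l ^ S) (c (l u))))))) := by
    have h9 : (c ^ (-(S : ℤ))) ((c ^ S) (l x))
        < (c ^ (-(S : ℤ))) (l (c ((l ^ S) (c ((l ^ S) (c (l u))))))) := mono _ hV
    have h10 : (c ^ (-(S : ℤ))) ((c ^ S) (l x)) = l x := by
      rw [← zpow_natCast c S, ← happ, show (-(S : ℤ) + (S : ℤ)) = 0 by ring]
      simp
    rwa [h10] at h9
  calc l x < _ := hfin
    _ = (k ^ (q * (2 * (S : ℤ) + 3) - p)) (c x) := hwx.symm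
    _ ≤ c x := hup
end

section
/- Suppose c, l are order-preserving bijections of ℝ satisfying: (a) c(l(c(x))) < l(c(l(x))) for all x, and (b) l(x) < c(x) for all x. Then for all x ∈ ℝ, c(l(x)) < l(c(x)) and l(c(x)) < c(l(x)), which is absurd; hence no such pair (c, l) exists. -/
/-- If `c, l` are order-preserving bijections of `ℝ` with (a) `c(l(c x)) < l(c(l x))` for
all `x` and (b) `l x < c x` for all `x`, then `c(l x) < l(c x)` and `l(c x) < c(l x)` for
all `x`, which is absurd: no such pair exists. -/
theorem stmt12 (c l : ℝ ≃o ℝ) (ha : ∀ x : ℝ, c (l (c x)) < l (c (l x)))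
    (hb : ∀ x : ℝ, l x < c x) :
    (∀ x : ℝ, c (l x) < l (c x) ∧ l (c x) < c (l x)) ∧ False := by
  have key : ∀ x : ℝ, c (l x) < l (c x) ∧ l (c x) < c (l x) := by
    intro x
    constructor
    · have h := ha (c.symm x)
      rw [c.apply_symm_apply] at h
      refine h.trans_le ?_
      have : c (l (c.symm x)) < c x := by
        have := hb (c.symm x)
        rw [c.apply_symm_apply] at this
        exact c.lt_iff_lt.mpr this
      exact (l.le_iff_le.mpr this.le)
    · have h := ha x
      have h2 : l (c x) < c.symm (l (c (l x))) := by
        rw [← c.lt_iff_lt, c.apply_symm_apply]; exact h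
      refine h2.trans ?_
      rw [← c.lt_iff_lt, c.apply_symm_apply]
      exact hb (c (l x))
  exact ⟨key, absurd (key 0).1 (not_lt_of_gt (key 0).2)⟩
end
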